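/- Fix n ≥ 1, let (α i)_{i : Fin (n*n)} be an orthonormal basis of Mₙ(ℂ) for the Hilbert–Schmidt inner product, let δ : Mₙ(ℂ) → M_{n·n}(ℂ) be the unique linear map with δ(α i) = (α i) ⊗ₖ (α i), with Hilbert–Schmidt adjoint δ†; assume δ is completely positive. If the operator norm of δ†(1) is at most 1 (i.e. ‖δ†(1) x‖ ≤ ‖x‖ for all x ∈ ℂⁿ with the ℓ² norm), then δ†(1) = 1, the identity matrix of Mₙ(ℂ). -/

import Mathlib

/-!
Because `⟨a ⊗ₖ b, c ⊗ₖ d⟩ = ⟨a, c⟩ ⟨b, d⟩`, the map `δ` carries the orthonormal basis `α` to an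
orthonormal family, so `δ† ∘ δ = id`. For a diagonal matrix unit `E = Eₐₐ`, the matrix `X = δ E`
is positive semidefinite, hence `1 = ⟨E, E⟩ = ⟨X, X⟩ = Tr (X²) ≤ (Tr X)²`, while
`Tr X = ⟨δ E, 1⟩ = ⟨E, δ†(1)⟩ = δ†(1)ₐₐ` up to conjugation. Thus every diagonal entry of `δ†(1)`
is at least `1`; since `δ†(1)` is a contraction, its `a`-th column, of length at most `1`, must be
the `a`-th unit vector.
-/

open Matrix Kronecker ComplexOrder

noncomputable section

/-- The Hilbert-Schmidt inner product `⟨a, b⟩ = Tr(aᴴ b)` on square matrices. -/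
def hsInner {m : Type*} [Fintype m] (a b : Matrix m m ℂ) : ℂ :=
  (aᴴ * b).trace

/-- The amplification `id ⊗ Φ` of a linear map `Φ` between matrix algebras,
acting blockwise on matrices indexed by `Fin k × p`. -/
def amplify {p q : Type*} [Fintype p] [Fintype q]
    (Φ : Matrix p p ℂ →ₗ[ℂ] Matrix q q ℂ) (k : ℕ)
    (M : Matrix (Fin k × p) (Fin k × p) ℂ) :
    Matrix (Fin k × q) (Fin k × q) ℂ :=
  Matrix.of fun i j => Φ (Matrix.of fun a b => M (i.1, a) (j.1, b)) i.2 j.2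

/-- A linear map between matrix algebras is completely positive if all its
amplifications send positive semidefinite matrices to positive semidefinite matrices. -/
def IsCompletelyPositive {p q : Type*} [Fintype p] [Fintype q]
    (Φ : Matrix p p ℂ →ₗ[ℂ] Matrix q q ℂ) : Prop :=
  ∀ (k : ℕ) (M : Matrix (Fin k × p) (Fin k × p) ℂ),
    M.PosSemidef → (amplify Φ k M).PosSemidef

section HilbertSchmidt

variable {m : Type*} [Fintype m]

lemma star_hsInner (a b : Matrix m m ℂ) : star (hsInner a b) = hsInner b a := by
  rw [hsInner, hsInner, ← trace_conjTranspose, conjTranspose_mul, conjTranspose_conjTranspose]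

lemma hsInner_self_eq_zero_iff {a : Matrix m m ℂ} : hsInner a a = 0 ↔ a = 0 :=
  trace_conjTranspose_mul_self_eq_zero_iff

lemma hsInner_sub_right (a b c : Matrix m m ℂ) :
    hsInner a (b - c) = hsInner a b - hsInner a c := by
  rw [hsInner, hsInner, hsInner, Matrix.mul_sub, trace_sub]

lemma hsInner_one_left [DecidableEq m] (a : Matrix m m ℂ) : hsInner 1 a = a.trace := by
  rw [hsInner, conjTranspose_one, Matrix.one_mul]

lemma hsInner_single_one_left [DecidableEq m] (i j : m) (a : Matrix m m ℂ) :
    hsInner (single i j 1) a = a i j := by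
  rw [hsInner, conjTranspose_single, star_one, trace_single_mul, one_smul]

lemma hsInner_kronecker {n : Type*} [Fintype n] (a c : Matrix m m ℂ) (b d : Matrix n n ℂ) :
    hsInner (a ⊗ₖ b) (c ⊗ₖ d) = hsInner a c * hsInner b d := by
  rw [hsInner, conjTranspose_kronecker, ← mul_kronecker_mul, trace_kronecker, hsInner, hsInner]

lemma eq_of_hsInner_eq_of_span_eq_top {ι : Type*} {v : ι → Matrix m m ℂ}
    (hv : Submodule.span ℂ (Set.range v) = ⊤) {w w' : Matrix m m ℂ}
    (h : ∀ j, hsInner (v j) w = hsInner (v j) w') : w = w' := by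
  set d := w - w'
  have hd : traceLinearMap m ℂ ℂ ∘ₗ LinearMap.mulLeft ℂ dᴴ = 0 :=
    LinearMap.ext_on_range hv fun j => by
      change hsInner d (v j) = 0
      rw [← star_hsInner, hsInner_sub_right, h, sub_self, star_zero]
  rw [← sub_eq_zero, ← hsInner_self_eq_zero_iff]
  exact LinearMap.congr_fun hd d

lemma Matrix.PosSemidef.hsInner_self_le_trace_sq {X : Matrix m m ℂ} (hX : X.PosSemidef) :
    hsInner X X ≤ X.trace ^ 2 := by
  classical
  -- `Tr (X * X) = ∑ λᵢ² ≤ (∑ λᵢ)² = Tr X ^ 2` for the eigenvalues `λᵢ ≥ 0` of `X`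
  rw [hsInner, hX.1.eq, hX.1.trace_eq_sum_eigenvalues]
  conv_lhs => rw [hX.1.spectral_theorem, ← map_mul, Unitary.conjStarAlgAut_apply,
    trace_mul_cycle, Unitary.coe_star_mul_self, Matrix.one_mul]
  rw [diagonal_mul_diagonal, trace_diagonal]
  simp only [Function.comp_apply, ← sq]
  exact Finset.sum_sq_le_sq_sum_of_nonneg fun i _ =>
    Complex.zero_le_real.mpr (hX.eigenvalues_nonneg i)

end HilbertSchmidt

lemma IsCompletelyPositive.posSemidef_map {p q : Type*} [Fintype p] [Fintype q]
    {Φ : Matrix p p ℂ →ₗ[ℂ] Matrix q q ℂ} (hΦ : IsCompletelyPositive Φ)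
    {A : Matrix p p ℂ} (hA : A.PosSemidef) : (Φ A).PosSemidef := by
  have h := (hΦ 1 (A.submatrix Prod.snd Prod.snd) (hA.submatrix _)).submatrix fun x => (0, x)
  convert h using 1
  ext x y
  rfl

lemma adjoint_comp_eq_id_of_map_eq_kronecker_self {m ι : Type*} [Fintype m] [DecidableEq ι]
    {α : ι → Matrix m m ℂ} (horth : ∀ i j, hsInner (α i) (α j) = if i = j then 1 else 0)
    (hspan : Submodule.span ℂ (Set.range α) = ⊤)
    {δ : Matrix m m ℂ →ₗ[ℂ] Matrix (m × m) (m × m) ℂ} (hδ : ∀ i, δ (α i) = α i ⊗ₖ α i)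
    {δd : Matrix (m × m) (m × m) ℂ →ₗ[ℂ] Matrix m m ℂ}
    (hadj : ∀ a b, hsInner (δ a) b = hsInner a (δd b)) :
    δd ∘ₗ δ = LinearMap.id :=
  LinearMap.ext_on_range hspan fun i => eq_of_hsInner_eq_of_span_eq_top hspan fun j => by
    rw [LinearMap.comp_apply, LinearMap.id_apply, ← hadj, hδ, hδ, hsInner_kronecker, horth]
    split_ifs <;> simp

lemma one_le_adjoint_one_apply_self {m q : Type*} [Fintype m] [Fintype q] [DecidableEq m]
    [DecidableEq q]
    {Φ : Matrix m m ℂ →ₗ[ℂ] Matrix q q ℂ} {Φd : Matrix q q ℂ →ₗ[ℂ] Matrix m m ℂ}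
    (hadj : ∀ a b, hsInner (Φ a) b = hsInner a (Φd b))
    (hpos : ∀ A, A.PosSemidef → (Φ A).PosSemidef) (hinv : Φd ∘ₗ Φ = LinearMap.id) (a : m) :
    1 ≤ Φd 1 a a := by
  have hX : (Φ (single a a 1)).PosSemidef := hpos _ <| by
    rw [← diagonal_single]; exact PosSemidef.diagonal (Pi.single_nonneg.mpr zero_le_one)
  have hnorm : hsInner (Φ (single a a 1)) (Φ (single a a 1)) = 1 := by
    rw [hadj, ← LinearMap.comp_apply, hinv, LinearMap.id_apply, hsInner_single_one_left,
      single_apply_same]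
  have htrace : (Φ (single a a 1)).trace = star (Φd 1 a a) := by
    rw [← hsInner_one_left, ← star_hsInner, hadj, hsInner_single_one_left]
  obtain ⟨t, ht, htX⟩ := RCLike.nonneg_iff_exists_ofReal.mp hX.trace_nonneg
  change (t : ℂ) = _ at htX
  have hΦd : Φd 1 a a = t := by
    rw [← star_star (Φd 1 a a), ← htrace, ← htX, Complex.star_def, Complex.conj_ofReal]
  have ht2 : 1 ≤ t ^ 2 := by
    have h := hX.hsInner_self_le_trace_sq
    rwa [hnorm, ← htX, ← Complex.ofReal_pow, ← Complex.ofReal_one, Complex.real_le_real] at h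
  rw [hΦd, ← Complex.ofReal_one, Complex.real_le_real]
  exact (one_le_sq_iff₀ ht).mp ht2

lemma eq_one_of_one_le_diag_of_mulVec_le {m : Type*} [Fintype m] [DecidableEq m]
    {P : Matrix m m ℂ} (hdiag : ∀ a, 1 ≤ P a a)
    (hnorm : ∀ x : m → ℂ, ∑ i, Complex.normSq ((P *ᵥ x) i) ≤ ∑ i, Complex.normSq (x i)) :
    P = 1 := by
  ext i a
  have hcol := hnorm (Pi.single a 1)
  simp only [mulVec_single_one, col_apply] at hcol
  have hunit : ∑ j, Complex.normSq ((Pi.single a 1 : m → ℂ) j) = 1 := by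
    simp [Pi.single_apply, apply_ite Complex.normSq]
  rw [hunit, ← Finset.add_sum_erase _ _ (Finset.mem_univ a)] at hcol
  obtain ⟨hre, him⟩ := Complex.le_def.mp (hdiag a)
  rw [Complex.one_re] at hre
  rw [Complex.one_im] at him
  have hPaa : Complex.normSq (P a a) = (P a a).re ^ 2 := by
    rw [Complex.normSq_apply, ← him]; ring
  have hoff : ∑ j ∈ Finset.univ.erase a, Complex.normSq (P j a) = 0 :=
    le_antisymm (by nlinarith) (Finset.sum_nonneg fun j _ => Complex.normSq_nonneg _)
  rcases eq_or_ne i a with rfl | hia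
  · rw [one_apply_eq]
    apply Complex.ext
    · rw [Complex.one_re]
      nlinarith
    · exact him.symm
  · rw [one_apply_ne hia, ← Complex.normSq_eq_zero]
    exact (Finset.sum_eq_zero_iff_of_nonneg (fun j _ => Complex.normSq_nonneg _)).mp hoff i
      (Finset.mem_erase.mpr ⟨hia, Finset.mem_univ i⟩)

theorem stmt_18_general (n : ℕ)
    (α : Fin (n * n) → Matrix (Fin n) (Fin n) ℂ)
    (horth : ∀ i j, hsInner (α i) (α j) = if i = j then 1 else 0)
    (hspan : Submodule.span ℂ (Set.range α) = ⊤)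
    (δ : Matrix (Fin n) (Fin n) ℂ →ₗ[ℂ] Matrix (Fin n × Fin n) (Fin n × Fin n) ℂ)
    (hδ : ∀ i, δ (α i) = α i ⊗ₖ α i)
    (δd : Matrix (Fin n × Fin n) (Fin n × Fin n) ℂ →ₗ[ℂ] Matrix (Fin n) (Fin n) ℂ)
    (hadj : ∀ a b, hsInner (δ a) b = hsInner a (δd b))
    (hCP : IsCompletelyPositive δ)
    (hnorm : ∀ x : Fin n → ℂ,
      ∑ i, Complex.normSq ((δd 1).mulVec x i) ≤ ∑ i, Complex.normSq (x i)) :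
    δd 1 = 1 :=
  eq_one_of_one_le_diag_of_mulVec_le
    (one_le_adjoint_one_apply_self hadj (fun _ => hCP.posSemidef_map)
      (adjoint_comp_eq_id_of_map_eq_kronecker_self horth hspan hδ hadj)) hnorm

/-- If δ is completely positive and δ†(1) has ℓ²-operator norm at most 1, then
δ†(1) is the identity matrix. -/
theorem stmt_18 (n : ℕ) (hn : 1 ≤ n)
    (α : Fin (n * n) → Matrix (Fin n) (Fin n) ℂ)
    (horth : ∀ i j, hsInner (α i) (α j) = if i = j then 1 else 0)
    (hspan : Submodule.span ℂ (Set.range α) = ⊤)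
    (δ : Matrix (Fin n) (Fin n) ℂ →ₗ[ℂ] Matrix (Fin n × Fin n) (Fin n × Fin n) ℂ)
    (hδ : ∀ i, δ (α i) = α i ⊗ₖ α i)
    (δd : Matrix (Fin n × Fin n) (Fin n × Fin n) ℂ →ₗ[ℂ] Matrix (Fin n) (Fin n) ℂ)
    (hadj : ∀ a b, hsInner (δ a) b = hsInner a (δd b))
    (hCP : IsCompletelyPositive δ)
    (hnorm : ∀ x : Fin n → ℂ,
      ∑ i, Complex.normSq ((δd 1).mulVec x i) ≤ ∑ i, Complex.normSq (x i)) :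
    δd 1 = 1 :=
  stmt_18_general n α horth hspan δ hδ δd hadj hCP hnorm
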